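/- Consider the planar system $\frac{dG}{d\zeta} = 2GZ(1-G)$, $\frac{dZ}{d\zeta} = (3G-1)(Z^2+1)$. The function $W(G,Z) = (Z^2+1)\,G\,(1-G)^2$ is a first integral: for every solution $(G(\zeta), Z(\zeta))$, $\frac{d}{d\zeta}\left[(Z^2+1)G(1-G)^2\right] = 0$. -/

import Mathlib

theorem hasDerivAt_sq_add_one_mul_mul_one_sub_sq {G Z : ℝ → ℝ} {g z ζ : ℝ}
    (hG : HasDerivAt G g ζ) (hZ : HasDerivAt Z z ζ) :
    HasDerivAt (fun t => ((Z t)^2 + 1) * G t * (1 - G t)^2)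
      (2 * Z ζ * z * G ζ * (1 - G ζ)^2 + ((Z ζ)^2 + 1) * (1 - G ζ) * (1 - 3 * G ζ) * g) ζ := by
  refine ((((hZ.pow 2).add_const 1).mul hG).mul ((hG.const_sub 1).pow 2)).congr_deriv ?_
  simp only [Pi.mul_apply, Pi.pow_apply, Nat.cast_ofNat]
  ring

theorem stmt_11 (G Z : ℝ → ℝ)
    (hG : ∀ ζ, HasDerivAt G (2 * G ζ * Z ζ * (1 - G ζ)) ζ)
    (hZ : ∀ ζ, HasDerivAt Z ((3 * G ζ - 1) * ((Z ζ)^2 + 1)) ζ) :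
    ∀ ζ, deriv (fun t => ((Z t)^2 + 1) * G t * (1 - G t)^2) ζ = 0 := by
  intro ζ
  have hW := hasDerivAt_sq_add_one_mul_mul_one_sub_sq (hG ζ) (hZ ζ)
  rw [hW.deriv]
  -- the two terms are `±2GZ(Z²+1)(1-G)²(3G-1)`
  ring
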